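/- For any two density matrices ρ₁, ρ₂, the superfidelity bounds the trace distance: 1 - D_tr(ρ₁,ρ₂) ≤ G(ρ₁,ρ₂), where D_tr(ρ₁,ρ₂) = (1/2)·tr|ρ₁ - ρ₂|. -/

import Mathlib

open Matrix ComplexOrder

noncomputable def sG {N : ℕ} (ρ σ : Matrix (Fin N) (Fin N) ℂ) : ℝ :=
  (trace (ρ * σ)).re +
    Real.sqrt (1 - (trace (ρ * ρ)).re) * Real.sqrt (1 - (trace (σ * σ)).re)

/-!
Write `Δ = ρ₁ - ρ₂` with eigenvalues `λᵢ` and `t = ½ ∑ |λᵢ|`. In an eigenbasis of `Δ`, the real part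
of `tr (Δ ρ)` for a density matrix `ρ` is `∑ λᵢ wᵢ` with weights `wᵢ ∈ [0, 1]`; since `∑ λᵢ = 0` the
weights may be shifted by `½`, so `|tr (Δ ρ)| ≤ t`. Applied to `ρ₁` and `ρ₂` this gives
`tr (ρ₁ ρ₂) ≥ max (tr ρ₁², tr ρ₂²) - t`, and the geometric mean `√(1 - tr ρ₁²) √(1 - tr ρ₂²)` is at
least `min (1 - tr ρ₁²) (1 - tr ρ₂²)`.
-/

theorem Real.min_le_sqrt_mul_sqrt (x y : ℝ) : min x y ≤ √x * √y := by
  rcases lt_or_ge (min x y) 0 with hneg | hnonneg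
  · exact hneg.le.trans (by positivity)
  · calc min x y = √(min x y) * √(min x y) := (Real.mul_self_sqrt hnonneg).symm
      _ ≤ √x * √y := by gcongr <;> simp

theorem Finset.abs_sum_mul_le_half_sum_abs {ι : Type*} (s : Finset ι) {a w : ι → ℝ}
    (ha : ∑ i ∈ s, a i = 0) (hw : ∀ i ∈ s, w i ∈ Set.Icc 0 1) :
    |∑ i ∈ s, a i * w i| ≤ 1 / 2 * ∑ i ∈ s, |a i| := by
  have hshift : ∑ i ∈ s, a i * w i = ∑ i ∈ s, a i * (w i - 1 / 2) := by
    simp only [mul_sub, Finset.sum_sub_distrib, ← Finset.sum_mul, ha, zero_mul, sub_zero]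
  rw [hshift, Finset.mul_sum]
  refine (Finset.abs_sum_le_sum_abs _ _).trans (Finset.sum_le_sum fun i hi => ?_)
  obtain ⟨hw0, hw1⟩ := hw i hi
  rw [abs_mul, mul_comm]
  gcongr
  rw [abs_le]
  constructor <;> linarith

namespace Matrix.IsHermitian

variable {𝕜 n : Type*} [RCLike 𝕜] [Fintype n] [DecidableEq n] {A : Matrix n n 𝕜}

theorem trace_mul_eq_sum_eigenvalues_mul (hA : A.IsHermitian) (B : Matrix n n 𝕜) :
    trace (A * B) = ∑ i, (hA.eigenvalues i : 𝕜) *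
      (star (hA.eigenvectorUnitary : Matrix n n 𝕜) * B * hA.eigenvectorUnitary) i i := by
  conv_lhs => rw [hA.spectral_theorem, Unitary.conjStarAlgAut_apply]
  generalize (hA.eigenvectorUnitary : Matrix n n 𝕜) = U
  rw [mul_assoc, mul_assoc, trace_mul_comm, mul_assoc, mul_assoc]
  simp [trace, diagonal_mul]

theorem exists_mem_stdSimplex_re_trace_mul_eq (hA : A.IsHermitian) {ρ : Matrix n n 𝕜}
    (hρ : ρ.PosSemidef) (htr : trace ρ = 1) :
    ∃ w ∈ stdSimplex ℝ n, RCLike.re (trace (A * ρ)) = ∑ i, hA.eigenvalues i * w i := by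
  set U : Matrix n n 𝕜 := (hA.eigenvectorUnitary : Matrix n n 𝕜)
  refine ⟨fun i => RCLike.re ((star U * ρ * U) i i), ⟨fun i => ?_, ?_⟩, ?_⟩
  · have := (hρ.conjTranspose_mul_mul_same U).diag_nonneg (i := i)
    exact (RCLike.nonneg_iff.mp this).1
  · have hUU : U * star U = 1 := Matrix.mem_unitaryGroup_iff.mp hA.eigenvectorUnitary.2
    have htrU : trace (star U * ρ * U) = 1 := by rw [trace_mul_cycle, hUU, one_mul, htr]
    rw [← RCLike.one_re (K := 𝕜), ← htrU, trace, map_sum]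
    rfl
  · simp only [hA.trace_mul_eq_sum_eigenvalues_mul, map_sum, RCLike.re_ofReal_mul, U]

theorem abs_re_trace_mul_le_half_sum_abs_eigenvalues (hA : A.IsHermitian) (hA₀ : trace A = 0)
    {ρ : Matrix n n 𝕜} (hρ : ρ.PosSemidef) (htr : trace ρ = 1) :
    |RCLike.re (trace (A * ρ))| ≤ 1 / 2 * ∑ i, |hA.eigenvalues i| := by
  obtain ⟨w, hw, hAρ⟩ := hA.exists_mem_stdSimplex_re_trace_mul_eq hρ htr
  have hsum : ∑ i, hA.eigenvalues i = 0 := by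
    simpa [hA₀] using (congrArg RCLike.re hA.trace_eq_sum_eigenvalues).symm
  rw [hAρ]
  exact Finset.univ.abs_sum_mul_le_half_sum_abs hsum fun i _ => mem_Icc_of_mem_stdSimplex hw i

end Matrix.IsHermitian

theorem one_sub_trace_distance_le_superfidelity {N : ℕ}
    (ρ₁ ρ₂ : Matrix (Fin N) (Fin N) ℂ)
    (h₁ : ρ₁.PosSemidef) (h₂ : ρ₂.PosSemidef)
    (ht₁ : trace ρ₁ = 1) (ht₂ : trace ρ₂ = 1)
    (hH : (ρ₁ - ρ₂).IsHermitian) :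
    1 - (1 / 2) * ∑ i, |hH.eigenvalues i| ≤ sG ρ₁ ρ₂ := by
  have hΔ : trace (ρ₁ - ρ₂) = 0 := by rw [trace_sub, ht₁, ht₂, sub_self]
  have h₁Δ := abs_le.mp (hH.abs_re_trace_mul_le_half_sum_abs_eigenvalues hΔ h₁ ht₁)
  have h₂Δ := abs_le.mp (hH.abs_re_trace_mul_le_half_sum_abs_eigenvalues hΔ h₂ ht₂)
  simp only [sub_mul, trace_sub, map_sub, trace_mul_comm ρ₂ ρ₁, RCLike.re_to_complex] at h₁Δ h₂Δ
  calc 1 - 1 / 2 * ∑ i, |hH.eigenvalues i|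
      ≤ (trace (ρ₁ * ρ₂)).re + min (1 - (trace (ρ₁ * ρ₁)).re) (1 - (trace (ρ₂ * ρ₂)).re) := by
        rw [← sub_le_iff_le_add']
        exact le_min (by linarith) (by linarith)
    _ ≤ sG ρ₁ ρ₂ := add_le_add_right (Real.min_le_sqrt_mul_sqrt _ _) _
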